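/- arXiv:2207.01249 — 2 statements merged into one kernel-verified Lean document; each statement's English description precedes it below -/
import Mathlib

section
/- Consider the adaptive deformation controller closed-loop system. Let e, θ̂ : ℝ → ℝ^m be differentiable trajectories satisfying, for all t ≥ 0, the closed-loop error dynamics e'(t) = −J(θ) · K_s · J(θ̂(t))ᵀ · e(t) and the parameter update law θ̂'(t) = −Γ⁻¹ · Y(e(t), θ̂(t))ᵀ · e(t). Assume further that the function t ↦ e(t)ᵀ · J(θ̂(t)) · K_s · J(θ̂(t))ᵀ · e(t) is uniformly continuous on [0, ∞). Then J(θ̂(t))ᵀ · e(t) → 0 as t → ∞. -/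
/-!
With `θ̃ = θ̂ - θ`, the Lyapunov function `V = ‖e‖²/2 + (Γ/2)‖θ̃‖²` satisfies
`V' = -xᵀ Kₛ x` for `x = J(θ̂)ᵀ e`: the map `v ↦ eᵀ J(v) Kₛ J(θ̂)ᵀ e` is linear with coefficient
vector `Y(e, θ̂)ᵀ e`, so the update law cancels the term in `θ̃` exactly. Since `V ≥ 0` is
nonincreasing and the dissipation rate is uniformly continuous, Barbalat's lemma gives
`xᵀ Kₛ x → 0`, and positive definiteness of `Kₛ` turns this into `x → 0`.
-/

open Matrix Filter Topology

/-- Deformation Jacobian `J(θ) = diag(θ) · C`. -/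
noncomputable def defJac {m k : ℕ} (C : Matrix (Fin m) (Fin (3*k)) ℝ) (θ : Fin m → ℝ) :
    Matrix (Fin m) (Fin (3*k)) ℝ :=
  Matrix.diagonal θ * C

/-- Regression matrix `Y(e, θ̂) = diag((C Kₛ Cᵀ diag(θ̂)) ·ᵥ e)`. -/
noncomputable def regY {m k : ℕ} (C : Matrix (Fin m) (Fin (3*k)) ℝ)
    (Ks : Matrix (Fin (3*k)) (Fin (3*k)) ℝ) (e θh : Fin m → ℝ) :
    Matrix (Fin m) (Fin m) ℝ :=
  Matrix.diagonal ((C * Ks * Cᵀ * Matrix.diagonal θh) *ᵥ e)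

open Set

lemma mul_sub_le_sub_of_hasDerivAt_neg {V f : ℝ → ℝ} {a b c : ℝ} (hab : a ≤ b)
    (hV : ∀ t ∈ Icc a b, HasDerivAt V (-f t) t) (hf : ∀ t ∈ Icc a b, c ≤ f t) :
    c * (b - a) ≤ V a - V b := by
  have hV' : ∀ t ∈ Icc a b, HasDerivAt (-V) (f t) t := fun t ht => by
    simpa using (hV t ht).neg
  have hmvt := (convex_Icc a b).mul_sub_le_image_sub_of_le_deriv
    (fun t ht => (hV' t ht).continuousAt.continuousWithinAt)
    (fun t ht => (hV' t (interior_subset ht)).differentiableAt.differentiableWithinAt)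
    (fun t ht => (hV' t (interior_subset ht)).deriv ▸ hf t (interior_subset ht))
    a (left_mem_Icc.2 hab) b (right_mem_Icc.2 hab) hab
  simp only [Pi.neg_apply] at hmvt
  linarith

lemma AntitoneOn.tendsto_sub_comp_add_of_bddBelow {V : ℝ → ℝ} {a : ℝ}
    (hV : AntitoneOn V (Ici a)) (hbdd : BddBelow (V '' Ici a)) (h : ℝ) :
    Tendsto (fun t => V t - V (t + h)) atTop (𝓝 0) := by
  set g : ℝ → ℝ := fun t => V (max a t)
  have hg : Antitone g := fun s t hst =>
    hV (le_max_left a s) (le_max_left a t) (max_le_max le_rfl hst)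
  have hgb : BddBelow (range g) :=
    hbdd.mono (by rintro _ ⟨t, rfl⟩; exact ⟨_, le_max_left a t, rfl⟩)
  have hgV : g =ᶠ[atTop] V :=
    (eventually_ge_atTop a).mono fun t ht => by simp only [g, max_eq_right ht]
  have hVL := (tendsto_atTop_ciInf hg hgb).congr' hgV
  simpa using hVL.sub (hVL.comp (tendsto_atTop_add_const_right _ h tendsto_id))

theorem tendsto_zero_of_hasDerivAt_neg_of_uniformContinuousOn {V f : ℝ → ℝ} {a : ℝ}
    (hV : ∀ t ≥ a, HasDerivAt V (-f t) t) (hf : ∀ t ≥ a, 0 ≤ f t)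
    (hbdd : BddBelow (V '' Ici a)) (huc : UniformContinuousOn f (Ici a)) :
    Tendsto f atTop (𝓝 0) := by
  have hanti : AntitoneOn V (Ici a) := fun s hs t _ hst => by
    simpa using mul_sub_le_sub_of_hasDerivAt_neg hst (fun u hu => hV u (le_trans hs hu.1))
      (fun u hu => hf u (le_trans hs hu.1))
  rw [Metric.tendsto_atTop]
  intro ε hε
  obtain ⟨δ, hδ, hfδ⟩ := Metric.uniformContinuousOn_iff.1 huc (ε / 2) (half_pos hε)
  obtain ⟨N, hN⟩ := eventually_atTop.1 <|
    (hanti.tendsto_sub_comp_add_of_bddBelow hbdd (δ / 2)).eventually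
      (gt_mem_nhds (by positivity : 0 < ε / 2 * (δ / 2)))
  refine ⟨max N a, fun t ht => ?_⟩
  have hta : a ≤ t := le_of_max_le_right ht
  by_contra! hft
  rw [Real.dist_eq, sub_zero, abs_of_nonneg (hf t hta)] at hft
  have hfar : ∀ u ∈ Icc t (t + δ / 2), ε / 2 ≤ f u := fun u hu => by
    have hut : dist u t < δ := by
      rw [Real.dist_eq, abs_of_nonneg (by linarith [hu.1])]; linarith [hu.2]
    have hclose := hfδ u (hta.trans hu.1) t hta hut
    rw [Real.dist_eq] at hclose
    linarith [(abs_lt.1 hclose).1]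
  have hdrop := mul_sub_le_sub_of_hasDerivAt_neg (by linarith : t ≤ t + δ / 2)
    (fun u hu => hV u (hta.trans hu.1)) hfar
  have hsmall := hN t (le_of_max_le_left ht)
  linarith

lemma Matrix.PosDef.exists_pos_mul_norm_sq_le {ι : Type*} [Fintype ι] {A : Matrix ι ι ℝ}
    (hA : A.PosDef) : ∃ c > 0, ∀ x : EuclideanSpace ℝ ι, c * ‖x‖ ^ 2 ≤ x ⬝ᵥ (A *ᵥ x) := by
  rcases isEmpty_or_nonempty ι with hι | hι
  · exact ⟨1, one_pos, fun x => by simp [Subsingleton.elim x 0]⟩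
  set q : EuclideanSpace ℝ ι → ℝ := fun x => x ⬝ᵥ (A *ᵥ x)
  have hq_smul (r : ℝ) (x : EuclideanSpace ℝ ι) : q (r • x) = r ^ 2 * q x := by
    simp only [q, WithLp.ofLp_smul, mulVec_smul, smul_dotProduct, dotProduct_smul, smul_eq_mul]
    ring
  have hq : Continuous q := by fun_prop
  obtain ⟨x₀, hx₀, hmin⟩ := (isCompact_sphere (0 : EuclideanSpace ℝ ι) 1).exists_isMinOn
    (NormedSpace.sphere_nonempty.2 zero_le_one) hq.continuousOn
  have hx₀0 : x₀ ≠ 0 := ne_zero_of_mem_unit_sphere ⟨x₀, hx₀⟩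
  refine ⟨q x₀, hA.dotProduct_mulVec_pos ?_, fun x => ?_⟩
  · simpa using hx₀0
  rcases eq_or_ne x 0 with rfl | hx
  · simp [q]
  have hxn : 0 < ‖x‖ := norm_pos_iff.2 hx
  have hy : ‖x‖⁻¹ • x ∈ Metric.sphere (0 : EuclideanSpace ℝ ι) 1 := by
    simp [norm_smul, hxn.ne']
  have hle : q x₀ ≤ ‖x‖⁻¹ ^ 2 * q x := hq_smul ‖x‖⁻¹ x ▸ hmin hy
  rwa [inv_pow, ← div_eq_inv_mul, le_div_iff₀ (by positivity)] at hle

lemma Matrix.PosDef.tendsto_zero_of_tendsto_dotProduct_mulVec {ι α : Type*} [Fintype ι]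
    {A : Matrix ι ι ℝ} (hA : A.PosDef) {l : Filter α} {x : α → EuclideanSpace ℝ ι}
    (hx : Tendsto (fun a => x a ⬝ᵥ (A *ᵥ x a)) l (𝓝 0)) : Tendsto x l (𝓝 0) := by
  obtain ⟨c, hc, hle⟩ := hA.exists_pos_mul_norm_sq_le
  have hsq : Tendsto (fun a => ‖x a‖ ^ 2) l (𝓝 0) :=
    squeeze_zero (fun a => sq_nonneg _) (fun a => (le_inv_mul_iff₀ hc).2 (hle (x a)))
      (by simpa using hx.const_mul c⁻¹)
  rw [tendsto_zero_iff_norm_tendsto_zero]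
  simpa using hsq.sqrt

lemma Matrix.dotProduct_mul_mul_transpose_mulVec {R m n : Type*} [CommSemiring R] [Fintype m]
    [Fintype n] (A : Matrix m n R) (B : Matrix n n R) (v : m → R) :
    v ⬝ᵥ ((A * B * Aᵀ) *ᵥ v) = (Aᵀ *ᵥ v) ⬝ᵥ (B *ᵥ (Aᵀ *ᵥ v)) := by
  rw [← mulVec_mulVec, ← mulVec_mulVec, dotProduct_mulVec, ← mulVec_transpose, dotProduct_mulVec,
    ← mulVec_transpose]

lemma dotProduct_defJac_mul_mulVec {m k : ℕ} (C : Matrix (Fin m) (Fin (3*k)) ℝ)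
    (Ks : Matrix (Fin (3*k)) (Fin (3*k)) ℝ) (v θh e : Fin m → ℝ) :
    e ⬝ᵥ ((defJac C v * Ks * (defJac C θh)ᵀ) *ᵥ e) = v ⬝ᵥ ((regY C Ks e θh)ᵀ *ᵥ e) := by
  have hJ : defJac C v * Ks * (defJac C θh)ᵀ = diagonal v * (C * Ks * Cᵀ * diagonal θh) := by
    simp only [defJac, transpose_mul, diagonal_transpose, Matrix.mul_assoc]
  rw [hJ, regY, diagonal_transpose, ← mulVec_mulVec]
  simp only [dotProduct, mulVec_diagonal]
  exact Finset.sum_congr rfl fun i _ => by ring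

lemma hasDerivAt_lyapunov {m k : ℕ} {C : Matrix (Fin m) (Fin (3*k)) ℝ}
    {Ks : Matrix (Fin (3*k)) (Fin (3*k)) ℝ} {Γ : ℝ} (hΓ : Γ ≠ 0) {θ : Fin m → ℝ}
    {e θh : ℝ → EuclideanSpace ℝ (Fin m)} {t : ℝ}
    (he : HasDerivAt e (WithLp.toLp 2 (-((defJac C θ * Ks * (defJac C (θh t))ᵀ) *ᵥ e t))) t)
    (hθh : HasDerivAt θh (WithLp.toLp 2 (-(Γ⁻¹ • ((regY C Ks (e t) (θh t))ᵀ *ᵥ e t)))) t) :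
    HasDerivAt (fun s => ‖e s‖ ^ 2 / 2 + Γ / 2 * ‖θh s - WithLp.toLp 2 θ‖ ^ 2)
      (-(e t ⬝ᵥ ((defJac C (θh t) * Ks * (defJac C (θh t))ᵀ) *ᵥ e t))) t := by
  refine ((he.norm_sq.div_const 2).add
    ((hθh.sub_const (WithLp.toLp 2 θ)).norm_sq.const_mul (Γ / 2))).congr_deriv ?_
  simp only [EuclideanSpace.inner_eq_star_dotProduct, star_trivial, WithLp.ofLp_sub,
    neg_dotProduct, smul_dotProduct, dotProduct_sub, smul_eq_mul]
  rw [dotProduct_comm _ (e t).ofLp, dotProduct_comm _ (θh t).ofLp, dotProduct_comm _ θ,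
    dotProduct_defJac_mul_mulVec, dotProduct_defJac_mul_mulVec]
  field_simp
  ring

theorem adaptive_controller_convergence_general
    (m k : ℕ)
    (C : Matrix (Fin m) (Fin (3*k)) ℝ)
    (Ks : Matrix (Fin (3*k)) (Fin (3*k)) ℝ) (hKs : Ks.PosDef)
    (Γ : ℝ) (hΓ : 0 < Γ)
    (θ : Fin m → ℝ)
    (e θh : ℝ → EuclideanSpace ℝ (Fin m))
    (hdyn : ∀ t ≥ (0:ℝ),
      HasDerivAt e (WithLp.toLp 2 (-((defJac C θ * Ks * (defJac C (θh t))ᵀ) *ᵥ e t))) t)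
    (hupd : ∀ t ≥ (0:ℝ),
      HasDerivAt θh (WithLp.toLp 2 (-(Γ⁻¹ • ((regY C Ks (e t) (θh t))ᵀ *ᵥ e t)))) t)
    (huc : UniformContinuousOn
      (fun t => e t ⬝ᵥ ((defJac C (θh t) * Ks * (defJac C (θh t))ᵀ) *ᵥ e t))
      (Set.Ici (0:ℝ))) :
    Tendsto (fun t => (WithLp.toLp 2 ((defJac C (θh t))ᵀ *ᵥ e t) : EuclideanSpace ℝ (Fin (3*k))))
      atTop (𝓝 0) := by
  have hdiss : Tendsto (fun t => e t ⬝ᵥ ((defJac C (θh t) * Ks * (defJac C (θh t))ᵀ) *ᵥ e t))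
      atTop (𝓝 0) := by
    refine tendsto_zero_of_hasDerivAt_neg_of_uniformContinuousOn
      (V := fun s => ‖e s‖ ^ 2 / 2 + Γ / 2 * ‖θh s - WithLp.toLp 2 θ‖ ^ 2)
      (fun t ht => hasDerivAt_lyapunov hΓ.ne' (hdyn t ht) (hupd t ht)) (fun t _ => ?_) ⟨0, ?_⟩ huc
    · simpa [dotProduct_mul_mul_transpose_mulVec] using
        hKs.posSemidef.dotProduct_mulVec_nonneg ((defJac C (θh t))ᵀ *ᵥ e t)
    · rintro _ ⟨t, -, rfl⟩
      positivity
  refine hKs.tendsto_zero_of_tendsto_dotProduct_mulVec ?_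
  simpa only [WithLp.ofLp_toLp, dotProduct_mul_mul_transpose_mulVec] using hdiss

/-- under the closed-loop error dynamics, the adaptive parameter update law,
and uniform continuity of the Lyapunov dissipation rate on `[0, ∞)`, the transformed error
`J(θ̂(t))ᵀ e(t)` tends to `0` as `t → ∞`. -/
theorem adaptive_controller_convergence
    (m k : ℕ) (hm : 0 < m) (hk : 0 < k)
    (C : Matrix (Fin m) (Fin (3*k)) ℝ)
    (Ks : Matrix (Fin (3*k)) (Fin (3*k)) ℝ) (hKs : Ks.PosDef)
    (Γ : ℝ) (hΓ : 0 < Γ)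
    (θ : Fin m → ℝ)
    (e θh : ℝ → EuclideanSpace ℝ (Fin m))
    (hdyn : ∀ t ≥ (0:ℝ),
      HasDerivAt e (WithLp.toLp 2 (-((defJac C θ * Ks * (defJac C (θh t))ᵀ) *ᵥ e t))) t)
    (hupd : ∀ t ≥ (0:ℝ),
      HasDerivAt θh (WithLp.toLp 2 (-(Γ⁻¹ • ((regY C Ks (e t) (θh t))ᵀ *ᵥ e t)))) t)
    (huc : UniformContinuousOn
      (fun t => e t ⬝ᵥ ((defJac C (θh t) * Ks * (defJac C (θh t))ᵀ) *ᵥ e t))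
      (Set.Ici (0:ℝ))) :
    Tendsto (fun t => (WithLp.toLp 2 ((defJac C (θh t))ᵀ *ᵥ e t) : EuclideanSpace ℝ (Fin (3*k))))
      atTop (𝓝 0) :=
  adaptive_controller_convergence_general m k C Ks hKs Γ hΓ θ e θh hdyn hupd huc
end

section
/- Along trajectories of the closed-loop system, the Lyapunov function derivative satisfies the identity V'(t) = −e(t)ᵀ · J(θ̂(t)) · K_s · J(θ̂(t))ᵀ · e(t) for all t. That is, if e, θ̂ : ℝ → ℝ^m are differentiable with e'(t) = −J(θ) · K_s · J(θ̂(t))ᵀ · e(t) and θ̂'(t) = −Γ⁻¹ · Y(e(t), θ̂(t))ᵀ · e(t), and V(t) := (1/2)‖e(t)‖² + (Γ/2)‖θ̂(t) − θ‖², then V is differentiable with V'(t) = −e(t)ᵀ · J(θ̂(t)) · K_s · J(θ̂(t))ᵀ · e(t). -/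
open Matrix Filter Topology

/-! Differentiating `V` gives `⟪e, e'⟫ + Γ ⟪θ̂ - θ, θ̂'⟫`. With `u := C Kₛ Cᵀ diag(θ̂) e`, the
error dynamics contribute `-∑ θᵢ uᵢ eᵢ` and, since `Yᵀ e = u ⊙ e`, the update law contributes
`-∑ (θ̂ᵢ - θᵢ) uᵢ eᵢ`; the unknown `θ` cancels, leaving `-∑ θ̂ᵢ uᵢ eᵢ = -eᵀ J(θ̂) Kₛ J(θ̂)ᵀ e`. -/

open scoped InnerProductSpace

theorem HasDerivAt.half_norm_sq_add_half_norm_sub_sq {F : Type*} [NormedAddCommGroup F]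
    [InnerProductSpace ℝ F] {e θh : ℝ → F} {e' θh' : F} {t : ℝ} (he : HasDerivAt e e' t)
    (hθh : HasDerivAt θh θh' t) (Γ : ℝ) (θ : F) :
    HasDerivAt (fun s => (1/2) * ‖e s‖^2 + (Γ/2) * ‖θh s - θ‖^2)
      (⟪e t, e'⟫_ℝ + Γ * ⟪θh t - θ, θh'⟫_ℝ) t := by
  refine ((he.norm_sq.const_mul (1/2)).add
    ((hθh.sub_const θ).norm_sq.const_mul (Γ/2))).congr_deriv ?_
  ring

namespace Matrix

theorem diagonal_mulVec_eq_mul {n α : Type*} [Fintype n] [DecidableEq n]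
    [NonUnitalNonAssocSemiring α] (v w : n → α) : diagonal v *ᵥ w = v * w :=
  funext (mulVec_diagonal v w)

theorem dotProduct_mul_add_sub_dotProduct {n α : Type*} [Fintype n] [CommRing α]
    (x u a b : n → α) : x ⬝ᵥ (a * u) + (b - a) ⬝ᵥ (u * x) = x ⬝ᵥ (b * u) := by
  simp only [dotProduct, ← Finset.sum_add_distrib, Pi.mul_apply, Pi.sub_apply]
  exact Finset.sum_congr rfl fun _ _ => by ring

end Matrix

theorem defJac_mul_mul_transpose_defJac_mulVec {m k : ℕ} (C : Matrix (Fin m) (Fin (3*k)) ℝ)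
    (Ks : Matrix (Fin (3*k)) (Fin (3*k)) ℝ) (v w x : Fin m → ℝ) :
    (defJac C v * Ks * (defJac C w)ᵀ) *ᵥ x = v * ((C * Ks * Cᵀ * diagonal w) *ᵥ x) := by
  simp only [defJac, transpose_mul, diagonal_transpose, Matrix.mul_assoc]
  rw [← mulVec_mulVec, diagonal_mulVec_eq_mul]

theorem regY_transpose_mulVec {m k : ℕ} (C : Matrix (Fin m) (Fin (3*k)) ℝ)
    (Ks : Matrix (Fin (3*k)) (Fin (3*k)) ℝ) (e w : Fin m → ℝ) :
    (regY C Ks e w)ᵀ *ᵥ e = (C * Ks * Cᵀ * diagonal w) *ᵥ e * e := by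
  rw [regY, diagonal_transpose, diagonal_mulVec_eq_mul]

theorem lyapunov_derivative_identity_general
    (m k : ℕ)
    (C : Matrix (Fin m) (Fin (3*k)) ℝ)
    (Ks : Matrix (Fin (3*k)) (Fin (3*k)) ℝ)
    (Γ : ℝ) (hΓ : 0 < Γ)
    (θ : EuclideanSpace ℝ (Fin m))
    (e θh : ℝ → EuclideanSpace ℝ (Fin m))
    (hdyn : ∀ t : ℝ,
      HasDerivAt e (WithLp.toLp 2 (-((defJac C θ * Ks * (defJac C (θh t))ᵀ) *ᵥ e t))) t)
    (hupd : ∀ t : ℝ,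
      HasDerivAt θh (WithLp.toLp 2 (-(Γ⁻¹ • ((regY C Ks (e t) (θh t))ᵀ *ᵥ e t)))) t)
    (V : ℝ → ℝ)
    (hV : V = fun t => (1/2) * ‖e t‖^2 + (Γ/2) * ‖θh t - θ‖^2) :
    ∀ t : ℝ, HasDerivAt V
      (-(e t ⬝ᵥ ((defJac C (θh t) * Ks * (defJac C (θh t))ᵀ) *ᵥ e t))) t := by
  intro t
  subst hV
  refine (HasDerivAt.half_norm_sq_add_half_norm_sub_sq (hdyn t) (hupd t) Γ θ).congr_deriv ?_
  simp only [EuclideanSpace.inner_eq_star_dotProduct, star_trivial,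
    WithLp.ofLp_sub, regY_transpose_mulVec, defJac_mul_mul_transpose_defJac_mulVec,
    neg_dotProduct, smul_dotProduct, smul_eq_mul]
  rw [mul_neg, mul_inv_cancel_left₀ hΓ.ne', dotProduct_comm _ (e t).ofLp,
    dotProduct_comm _ (_ - _), ← neg_add, dotProduct_mul_add_sub_dotProduct]

/-- along closed-loop trajectories, the Lyapunov function
`V(t) = ½‖e(t)‖² + (Γ/2)‖θ̂(t) − θ‖²` is differentiable with
`V'(t) = −e(t)ᵀ J(θ̂(t)) Kₛ J(θ̂(t))ᵀ e(t)`. -/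
theorem lyapunov_derivative_identity
    (m k : ℕ) (hm : 0 < m) (hk : 0 < k)
    (C : Matrix (Fin m) (Fin (3*k)) ℝ)
    (Ks : Matrix (Fin (3*k)) (Fin (3*k)) ℝ) (hKs : Ksᵀ = Ks)
    (Γ : ℝ) (hΓ : 0 < Γ)
    (θ : EuclideanSpace ℝ (Fin m))
    (e θh : ℝ → EuclideanSpace ℝ (Fin m))
    (hdyn : ∀ t : ℝ,
      HasDerivAt e (WithLp.toLp 2 (-((defJac C θ * Ks * (defJac C (θh t))ᵀ) *ᵥ e t))) t)
    (hupd : ∀ t : ℝ,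
      HasDerivAt θh (WithLp.toLp 2 (-(Γ⁻¹ • ((regY C Ks (e t) (θh t))ᵀ *ᵥ e t)))) t)
    (V : ℝ → ℝ)
    (hV : V = fun t => (1/2) * ‖e t‖^2 + (Γ/2) * ‖θh t - θ‖^2) :
    ∀ t : ℝ, HasDerivAt V
      (-(e t ⬝ᵥ ((defJac C (θh t) * Ks * (defJac C (θh t))ᵀ) *ᵥ e t))) t :=
  lyapunov_derivative_identity_general m k C Ks Γ hΓ θ e θh hdyn hupd V hV
end
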